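/- For every λ ∈ X and every simple root α: s_α λ ≤_e λ in the excellent order if and only if s_α λ ≥_d λ in the dominance order (equivalently, if and only if (λ, α∨) ≤ 0). -/

import Mathlib

open scoped InnerProductSpace Classical

noncomputable section

/-- A reduced crystallographic root system `Φ` spanning a finite-dimensional real inner
product space `V`, together with a choice of simple roots `π` (determining the positive
system), the corresponding fundamental weights `ω`, the reflections `s`, the Weyl group
`W` and the weight lattice `X`. -/
structure RootSystemData (V : Type) [NormedAddCommGroup V] [InnerProductSpace ℝ V]
    [FiniteDimensional ℝ V] where
  /-- the (finite) set of roots -/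
  Φ : Finset V
  /-- the rank -/
  r : ℕ
  /-- the simple roots `α₁, …, α_r` -/
  π : Fin r → V
  /-- the fundamental weights `ω₁, …, ω_r` -/
  ω : Fin r → V
  /-- the orthogonal reflection attached to a root -/
  s : V → (V ≃ₗ[ℝ] V)
  /-- the Weyl group -/
  W : Subgroup (V ≃ₗ[ℝ] V)
  /-- the weight lattice -/
  X : AddSubgroup V
  root_ne_zero : ∀ α ∈ Φ, α ≠ (0 : V)
  root_span : Submodule.span ℝ (Φ : Set V) = ⊤
  reduced : ∀ α ∈ Φ, ∀ c : ℝ, c • α ∈ Φ → c = 1 ∨ c = -1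
  crystallographic : ∀ α ∈ Φ, ∀ β ∈ Φ, ∃ n : ℤ, 2 * ⟪β, α⟫_ℝ / ⟪α, α⟫_ℝ = (n : ℝ)
  s_apply : ∀ α ∈ Φ, ∀ v : V, s α v = v - (2 * ⟪v, α⟫_ℝ / ⟪α, α⟫_ℝ) • α
  refl_stable : ∀ α ∈ Φ, ∀ β ∈ Φ, s α β ∈ Φ
  W_eq : W = Subgroup.closure {g : V ≃ₗ[ℝ] V | ∃ α ∈ Φ, g = s α}
  inner_invariant : ∀ g ∈ W, ∀ u v : V, ⟪g u, g v⟫_ℝ = ⟪u, v⟫_ℝ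
  simple_mem : ∀ i, π i ∈ Φ
  simple_indep : LinearIndependent ℝ π
  pos_or_neg : ∀ α ∈ Φ,
      (∃ c : Fin r → ℝ, (∀ i, 0 ≤ c i) ∧ α = ∑ i, c i • π i) ∨
      (∃ c : Fin r → ℝ, (∀ i, 0 ≤ c i) ∧ -α = ∑ i, c i • π i)
  fund : ∀ i j, 2 * ⟪ω i, π j⟫_ℝ / ⟪π j, π j⟫_ℝ = if i = j then (1 : ℝ) else 0
  X_eq : X = AddSubgroup.closure (Set.range ω)
  X_stable : ∀ g ∈ W, ∀ x ∈ X, g x ∈ X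

/-- The pairing `(v, α∨) = 2(v,α)/(α,α)` of a vector with the coroot of `α`. -/
def pairing {V : Type} [NormedAddCommGroup V] [InnerProductSpace ℝ V]
    (v α : V) : ℝ := 2 * ⟪v, α⟫_ℝ / ⟪α, α⟫_ℝ

namespace RootSystemData

variable {V : Type} [NormedAddCommGroup V] [InnerProductSpace ℝ V] [FiniteDimensional ℝ V]
variable (C : RootSystemData V)

/-- `α` is a nonnegative combination of the simple roots (a positive root, if `α ∈ Φ`). -/
def IsPos (α : V) : Prop := ∃ c : Fin C.r → ℝ, (∀ i, 0 ≤ c i) ∧ α = ∑ i, c i • C.π i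

/-- `α` is a nonpositive combination of the simple roots (a negative root, if `α ∈ Φ`). -/
def IsNeg (α : V) : Prop := C.IsPos (-α)

/-- A weight is dominant if it pairs nonnegatively with all simple coroots. -/
def IsDominant (lam : V) : Prop := ∀ i, 0 ≤ pairing lam (C.π i)

/-- The product of the simple reflections along a word. -/
def wordProd (l : List (Fin C.r)) : V ≃ₗ[ℝ] V := (l.map fun i => C.s (C.π i)).prod

/-- The length of `w`: the least length of an expression of `w` as a product of
simple reflections. -/
def length (w : V ≃ₗ[ℝ] V) : ℕ :=
  sInf {n | ∃ l : List (Fin C.r), l.length = n ∧ C.wordProd l = w}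

/-- The (strong) Bruhat order on the Weyl group: `u ≤ v` iff `v` is obtained from `u`
by successively multiplying by reflections, increasing the length at each step. -/
def BruhatLE (u v : V ≃ₗ[ℝ] V) : Prop :=
  Relation.ReflTransGen
    (fun a b => (∃ α ∈ C.Φ, b = a * C.s α) ∧ C.length a < C.length b) u v

/-- The Steinberg weight `e_v = v⁻¹ ⬝ ∑_{i : v⁻¹ α_i < 0} ω_i`. -/
def steinberg (v : V ≃ₗ[ℝ] V) : V :=
  v⁻¹ (∑ i ∈ Finset.univ.filter (fun i => C.IsNeg (v⁻¹ (C.π i))), C.ω i)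

/-- The excellent order on weights: `λ ≤ₑ μ` iff `(λ,λ) < (μ,μ)`, or `λ = wν`, `μ = zν`
for some dominant `ν ∈ X` and `w ≤ z` in the Bruhat order. -/
def ExcLE (lam mu : V) : Prop :=
  ⟪lam, lam⟫_ℝ < ⟪mu, mu⟫_ℝ ∨
    ∃ nu ∈ C.X, C.IsDominant nu ∧
      ∃ w ∈ C.W, ∃ z ∈ C.W, C.BruhatLE w z ∧ lam = w nu ∧ mu = z nu

/-- The strict excellent order. -/
def ExcLT (lam mu : V) : Prop := C.ExcLE lam mu ∧ lam ≠ mu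

/-- The antipodal excellent order: `λ ≤ₐ μ` iff `-λ ≤ₑ -μ`. -/
def AntiLE (lam mu : V) : Prop := C.ExcLE (-lam) (-mu)

/-- The strict antipodal excellent order. -/
def AntiLT (lam mu : V) : Prop := C.AntiLE lam mu ∧ lam ≠ mu

/-- The dominance order: `μ ≤_d ν` iff `ν - μ` is a nonnegative integer combination of
the positive roots. -/
def DomLE (mu nu : V) : Prop :=
  ∃ c : V → ℕ, nu - mu = ∑ α ∈ C.Φ.filter (fun a => C.IsPos a), (c α : ℝ) • α

theorem omega_mem (i : Fin C.r) : C.ω i ∈ C.X := by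
  rw [C.X_eq]; exact AddSubgroup.subset_closure ⟨i, rfl⟩

theorem steinberg_mem {v : V ≃ₗ[ℝ] V} (hv : v ∈ C.W) : C.steinberg v ∈ C.X :=
  C.X_stable _ (inv_mem hv) _ (AddSubgroup.sum_mem _ fun i _ => C.omega_mem i)

/-- The group ring `ℤ[X]` of the weight lattice. -/
abbrev GroupRing := AddMonoidAlgebra ℤ ↥C.X

/-- The basis element `e^λ` of `ℤ[X]`. -/
def expo (x : V) (hx : x ∈ C.X) : C.GroupRing := AddMonoidAlgebra.single ⟨x, hx⟩ 1

/-- `e^λ`, defined for all `λ : V` (and zero off the lattice). -/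
def expoOf (x : V) : C.GroupRing := if hx : x ∈ C.X then C.expo x hx else 0

/-- The coefficient of `e^x` in an element of `ℤ[X]`. -/
def coeff (m : C.GroupRing) (x : ↥C.X) : ℤ := (AddMonoidAlgebra.coeff m : ↥C.X →₀ ℤ) x

/-- The support of an element of `ℤ[X]`. -/
def supp (m : C.GroupRing) : Finset ↥C.X := (AddMonoidAlgebra.coeff m : ↥C.X →₀ ℤ).support

/-- The action of `g ∈ W` on the weight lattice. -/
def actX (g : V ≃ₗ[ℝ] V) (hg : g ∈ C.W) : ↥C.X → ↥C.X :=
  fun x => ⟨g x, C.X_stable g hg x.1 x.2⟩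

/-- The action of `g ∈ W` on `ℤ[X]`, with `e^λ ↦ e^{gλ}`. -/
def wAct (g : V ≃ₗ[ℝ] V) (hg : g ∈ C.W) (m : C.GroupRing) : C.GroupRing :=
  AddMonoidAlgebra.ofCoeff (Finsupp.mapDomain (C.actX g hg) (AddMonoidAlgebra.coeff m))

/-- `m` lies in the invariant subring `ℤ[X]^W`. -/
def IsWInvariant (m : C.GroupRing) : Prop := ∀ g (hg : g ∈ C.W), C.wAct g hg m = m

/-- The parabolic subgroup `W_{Π'}` generated by the simple reflections `s_α, α ∈ Π'`,
for a subset `Π'` of the simple roots (given by a subset `J` of the index set). -/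
def parabolicSubgroup (J : Set (Fin C.r)) : Subgroup (V ≃ₗ[ℝ] V) :=
  Subgroup.closure {g | ∃ i ∈ J, g = C.s (C.π i)}

theorem parabolic_le (J : Set (Fin C.r)) : C.parabolicSubgroup J ≤ C.W := by
  refine (Subgroup.closure_le _).2 ?_
  rintro g ⟨i, _, rfl⟩
  rw [C.W_eq]
  exact Subgroup.subset_closure ⟨C.π i, C.simple_mem i, rfl⟩

/-- `m` lies in the invariant subring `ℤ[X]^H` for a subgroup `H ≤ W`. -/
def IsInvariantUnder (H : Subgroup (V ≃ₗ[ℝ] V)) (hH : H ≤ C.W) (m : C.GroupRing) : Prop :=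
  ∀ g (hg : g ∈ H), C.wAct g (hH hg) m = m

/-- `v` is of minimal length in its coset `v ⬝ W_{Π'}`. -/
def IsMinCosetRep (J : Set (Fin C.r)) (v : V ≃ₗ[ℝ] V) : Prop :=
  v ∈ C.W ∧ ∀ z ∈ C.parabolicSubgroup J, C.length v ≤ C.length (v * z)

/-- The subgroup generated by the simple reflections fixing a given vector. -/
def fixSubgroup (x : V) : Subgroup (V ≃ₗ[ℝ] V) :=
  Subgroup.closure {g | ∃ i : Fin C.r, C.s (C.π i) x = x ∧ g = C.s (C.π i)}

end RootSystemData

/-!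
If `(λ, α∨) ≤ 0`, write `λ = zν` with `ν` dominant. Either `s_α λ = λ`, or `z⁻¹α` is a negative
root, and then `s_α z ≤ z` is a single Bruhat step (`z = s_α z ⬝ s_{z⁻¹α}` with
`ℓ(s_α z) < ℓ(z)`), so `s_α λ = (s_α z)ν ≤ₑ zν = λ`.

Conversely, `s_α λ` and `λ` have the same norm, so `s_α λ ≤ₑ λ` means `s_α λ = wν`, `λ = zν` with
`w ≤ z` in the Bruhat order. Along a step `a < a s_β` with `β > 0` the root `aβ` is positive (by
the deletion property), so `aν - a s_β ν = (ν, β∨) aβ` is a nonnegative combination of simple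
roots; hence so is `s_α λ - λ = -(λ, α∨) α`, i.e. `(λ, α∨) ≤ 0`. Since `(λ, α∨)` is an integer,
the same condition characterises `λ ≤_d s_α λ`.
-/

theorem pairing_sub_left {V : Type} [NormedAddCommGroup V] [InnerProductSpace ℝ V]
    (u v α : V) : pairing (u - v) α = pairing u α - pairing v α := by
  simp only [pairing, inner_sub_left]; ring

theorem pairing_add_left {V : Type} [NormedAddCommGroup V] [InnerProductSpace ℝ V]
    (u v α : V) : pairing (u + v) α = pairing u α + pairing v α := by
  simp only [pairing, inner_add_left]; ring

theorem pairing_neg_left {V : Type} [NormedAddCommGroup V] [InnerProductSpace ℝ V]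
    (u α : V) : pairing (-u) α = -pairing u α := by
  simp only [pairing, inner_neg_left]; ring

theorem pairing_smul_left {V : Type} [NormedAddCommGroup V] [InnerProductSpace ℝ V]
    (c : ℝ) (u α : V) : pairing (c • u) α = c * pairing u α := by
  simp only [pairing, real_inner_smul_left]; ring

namespace RootSystemData

variable {V : Type} [NormedAddCommGroup V] [InnerProductSpace ℝ V] [FiniteDimensional ℝ V]
variable {C : RootSystemData V}

section Reflections

theorem inner_self_pos_of_mem {α : V} (hα : α ∈ C.Φ) : 0 < ⟪α, α⟫_ℝ :=
  real_inner_self_pos.2 (C.root_ne_zero α hα)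

theorem s_apply_pairing {α : V} (hα : α ∈ C.Φ) (v : V) : C.s α v = v - pairing v α • α :=
  C.s_apply α hα v

theorem pairing_nonneg_iff {α : V} (hα : α ∈ C.Φ) (v : V) :
    0 ≤ pairing v α ↔ 0 ≤ ⟪v, α⟫_ℝ := by
  rw [pairing, mul_div_right_comm,
    mul_nonneg_iff_of_pos_left (div_pos two_pos (inner_self_pos_of_mem hα))]

theorem pairing_self {α : V} (hα : α ∈ C.Φ) : pairing α α = 2 := by
  rw [pairing, mul_div_assoc, div_self (inner_self_pos_of_mem hα).ne', mul_one]

theorem s_apply_self {α : V} (hα : α ∈ C.Φ) : C.s α α = -α := by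
  rw [s_apply_pairing hα, pairing_self hα]; module

theorem s_mul_self {α : V} (hα : α ∈ C.Φ) : C.s α * C.s α = 1 := by
  ext v
  change C.s α (C.s α v) = v
  rw [s_apply_pairing hα, s_apply_pairing hα, pairing_sub_left, pairing_smul_left,
    pairing_self hα]
  module

theorem s_inv {α : V} (hα : α ∈ C.Φ) : (C.s α)⁻¹ = C.s α :=
  inv_eq_of_mul_eq_one_left (s_mul_self hα)

theorem s_mem_W {α : V} (hα : α ∈ C.Φ) : C.s α ∈ C.W := by
  rw [C.W_eq]; exact Subgroup.subset_closure ⟨α, hα, rfl⟩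

theorem neg_mem_Φ {α : V} (hα : α ∈ C.Φ) : -α ∈ C.Φ := by
  simpa only [s_apply_self hα] using C.refl_stable α hα α hα

theorem s_neg {α : V} (hα : α ∈ C.Φ) : C.s (-α) = C.s α := by
  ext v
  rw [s_apply_pairing (neg_mem_Φ hα), s_apply_pairing hα]
  simp only [pairing, inner_neg_left, inner_neg_right, neg_neg, neg_div, mul_neg, neg_smul,
    smul_neg]

theorem apply_mem_Φ {g : V ≃ₗ[ℝ] V} (hg : g ∈ C.W) {α : V} (hα : α ∈ C.Φ) : g α ∈ C.Φ := by
  rw [C.W_eq] at hg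
  induction hg using Subgroup.closure_induction'' generalizing α with
  | mem x hx =>
    obtain ⟨β, hβ, rfl⟩ := hx
    exact C.refl_stable β hβ α hα
  | inv_mem x hx =>
    obtain ⟨β, hβ, rfl⟩ := hx
    rw [s_inv hβ]
    exact C.refl_stable β hβ α hα
  | one => exact hα
  | mul x y _ _ hx hy => exact hx (hy hα)

theorem inner_apply_left {g : V ≃ₗ[ℝ] V} (hg : g ∈ C.W) (u v : V) :
    ⟪g u, v⟫_ℝ = ⟪u, g⁻¹ v⟫_ℝ := by
  simpa using (C.inner_invariant g⁻¹ (inv_mem hg) (g u) v).symm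

theorem pairing_apply_left {g : V ≃ₗ[ℝ] V} (hg : g ∈ C.W) (u v : V) :
    pairing (g u) v = pairing u (g⁻¹ v) := by
  rw [pairing, pairing, inner_apply_left hg, C.inner_invariant g⁻¹ (inv_mem hg)]

theorem mul_s_mul_inv {g : V ≃ₗ[ℝ] V} (hg : g ∈ C.W) {β : V} (hβ : β ∈ C.Φ) :
    g * C.s β * g⁻¹ = C.s (g β) := by
  ext v
  change g (C.s β (g⁻¹ v)) = C.s (g β) v
  have hpair : pairing v (g β) = pairing (g⁻¹ v) β := by
    simpa using pairing_apply_left hg (g⁻¹ v) (g β)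
  rw [s_apply_pairing hβ, s_apply_pairing (apply_mem_Φ hg hβ), map_sub, map_smul, hpair]
  simp

theorem mul_s {g : V ≃ₗ[ℝ] V} (hg : g ∈ C.W) {β : V} (hβ : β ∈ C.Φ) :
    g * C.s β = C.s (g β) * g := by
  rw [← mul_s_mul_inv hg hβ, inv_mul_cancel_right]

end Reflections

section Positivity

theorem isPos_zero : C.IsPos 0 := ⟨0, fun _ => le_rfl, by simp⟩

theorem IsPos.add {x y : V} (hx : C.IsPos x) (hy : C.IsPos y) : C.IsPos (x + y) := by
  obtain ⟨c, hc, rfl⟩ := hx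
  obtain ⟨d, hd, rfl⟩ := hy
  exact ⟨c + d, fun i => add_nonneg (hc i) (hd i), by simp [add_smul, Finset.sum_add_distrib]⟩

theorem IsPos.smul {x : V} (hx : C.IsPos x) {t : ℝ} (ht : 0 ≤ t) : C.IsPos (t • x) := by
  obtain ⟨c, hc, rfl⟩ := hx
  exact ⟨t • c, fun i => mul_nonneg ht (hc i), by simp [Finset.smul_sum, smul_smul]⟩

theorem isPos_sum {ι : Type*} (s : Finset ι) {f : ι → V} (hf : ∀ i ∈ s, C.IsPos (f i)) :
    C.IsPos (∑ i ∈ s, f i) :=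
  Finset.sum_induction f C.IsPos (fun _ _ => IsPos.add) isPos_zero hf

theorem sum_single_smul_π (i : Fin C.r) (t : ℝ) :
    ∑ j, (Pi.single i t : Fin C.r → ℝ) j • C.π j = t • C.π i := by
  simp [Pi.single_apply, ite_smul]

theorem isPos_π (i : Fin C.r) : C.IsPos (C.π i) :=
  ⟨Pi.single i 1, fun j => by by_cases h : j = i <;> simp [h],
    by rw [sum_single_smul_π, one_smul]⟩

theorem IsPos.nonneg_of_smul_π {t : ℝ} {i : Fin C.r} (h : C.IsPos (t • C.π i)) : 0 ≤ t := by
  obtain ⟨c, hc, hcs⟩ := h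
  rw [← sum_single_smul_π] at hcs
  have hci := Fintype.linearIndependent_iffₛ.1 C.simple_indep _ _ hcs i
  rw [Pi.single_eq_same] at hci
  exact hci ▸ hc i

theorem isPos_or_isNeg {α : V} (hα : α ∈ C.Φ) : C.IsPos α ∨ C.IsNeg α :=
  C.pos_or_neg α hα

theorem IsPos.eq_zero_of_isNeg {x : V} (hp : C.IsPos x) (hn : C.IsNeg x) : x = 0 := by
  obtain ⟨c, hc, rfl⟩ := hp
  obtain ⟨d, hd, hds⟩ := hn
  have hsum : ∑ i, (c i + d i) • C.π i = ∑ i, (0 : ℝ) • C.π i := by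
    simp only [add_smul, Finset.sum_add_distrib, ← hds, add_neg_cancel, zero_smul,
      Finset.sum_const_zero]
  have hcd := Fintype.linearIndependent_iffₛ.1 C.simple_indep _ _ hsum
  have hc0 : ∀ i, c i = 0 := fun i => by linarith [hcd i, hc i, hd i]
  simp [hc0]

theorem IsNeg.not_isPos {α : V} (hα : α ∈ C.Φ) (hn : C.IsNeg α) : ¬ C.IsPos α :=
  fun hp => C.root_ne_zero α hα (hp.eq_zero_of_isNeg hn)

theorem IsPos.eq_π_of_isNeg_s_π {α : V} (hα : α ∈ C.Φ) (hp : C.IsPos α) {i : Fin C.r}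
    (hn : C.IsNeg (C.s (C.π i) α)) : α = C.π i := by
  obtain ⟨c, hc, hcs⟩ := hp
  obtain ⟨d, hd, hds⟩ := hn
  have hsum : ∑ j, (c j + d j) • C.π j =
      ∑ j, (Pi.single i (pairing α (C.π i)) : Fin C.r → ℝ) j • C.π j := by
    rw [sum_single_smul_π]
    simp only [add_smul, Finset.sum_add_distrib, ← hcs, ← hds, s_apply_pairing (C.simple_mem i)]
    abel
  have hcoef := Fintype.linearIndependent_iffₛ.1 C.simple_indep _ _ hsum
  have hα_eq : α = c i • C.π i := by
    rw [← sum_single_smul_π, hcs]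
    refine Finset.sum_congr rfl fun j _ => ?_
    by_cases hji : j = i
    · subst hji; simp
    · have := hcoef j
      rw [Pi.single_eq_of_ne hji] at this
      rw [Pi.single_eq_of_ne hji, show c j = 0 by linarith [hc j, hd j], zero_smul]
  rcases C.reduced _ (C.simple_mem i) (c i) (hα_eq ▸ hα) with h | h
  · rw [hα_eq, h, one_smul]
  · linarith [hc i]

theorem isPos_s_π_of_ne {α : V} (hα : α ∈ C.Φ) (hp : C.IsPos α) {i : Fin C.r}
    (hne : α ≠ C.π i) : C.IsPos (C.s (C.π i) α) :=
  (isPos_or_isNeg (C.refl_stable _ (C.simple_mem i) _ hα)).resolve_right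
    fun hn => hne (hp.eq_π_of_isNeg_s_π hα hn)

theorem IsDominant.inner_nonneg {ν β : V} (hν : C.IsDominant ν) (hβ : C.IsPos β) :
    0 ≤ ⟪ν, β⟫_ℝ := by
  obtain ⟨c, hc, rfl⟩ := hβ
  rw [inner_sum]
  refine Finset.sum_nonneg fun m _ => ?_
  rw [real_inner_smul_right]
  exact mul_nonneg (hc m) ((pairing_nonneg_iff (C.simple_mem m) ν).1 (hν m))

theorem IsPos.exists_inner_π_pos {x : V} (hp : C.IsPos x) (hx : x ≠ 0) :
    ∃ i, 0 < ⟪x, C.π i⟫_ℝ := by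
  by_contra! hnonpos
  obtain ⟨c, hc, hcs⟩ := hp
  have hself : ⟪x, x⟫_ℝ ≤ 0 := by
    nth_rw 1 [hcs]
    rw [sum_inner]
    refine Finset.sum_nonpos fun m _ => ?_
    rw [real_inner_smul_left, real_inner_comm]
    exact mul_nonpos_of_nonneg_of_nonpos (hc m) (hnonpos m)
  exact hself.not_gt (real_inner_self_pos.2 hx)

end Positivity

section Words

theorem wordProd_cons (j : Fin C.r) (l : List (Fin C.r)) :
    C.wordProd (j :: l) = C.s (C.π j) * C.wordProd l := by
  simp [wordProd]

theorem wordProd_append (l₁ l₂ : List (Fin C.r)) :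
    C.wordProd (l₁ ++ l₂) = C.wordProd l₁ * C.wordProd l₂ := by
  simp [wordProd]

theorem wordProd_singleton (j : Fin C.r) : C.wordProd [j] = C.s (C.π j) := by
  simp [wordProd]

theorem wordProd_mem (l : List (Fin C.r)) : C.wordProd l ∈ C.W := by
  induction l with
  | nil => exact C.W.one_mem
  | cons j l ih => rw [wordProd_cons]; exact C.W.mul_mem (s_mem_W (C.simple_mem j)) ih

theorem wordProd_reverse (l : List (Fin C.r)) :
    C.wordProd l.reverse = (C.wordProd l)⁻¹ := by
  induction l with
  | nil => simp [wordProd]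
  | cons j l ih =>
    rw [wordProd_cons, List.reverse_cons, wordProd_append, ih, wordProd_singleton,
      mul_inv_rev, s_inv (C.simple_mem j)]

end Words

section Height

def rho : V := ∑ j, C.ω j

theorem inner_π_rho (i : Fin C.r) : ⟪C.π i, C.rho⟫_ℝ = ⟪C.π i, C.π i⟫_ℝ / 2 := by
  have hpos := inner_self_pos_of_mem (C.simple_mem i)
  have hω : ∀ j, ⟪C.π i, C.ω j⟫_ℝ = if j = i then ⟪C.π i, C.π i⟫_ℝ / 2 else 0 := by
    intro j
    have h := C.fund j i
    rw [div_eq_iff hpos.ne'] at h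
    rw [real_inner_comm]
    split_ifs at h ⊢ <;> linarith
  simp [rho, inner_sum, hω]

theorem inner_s_π_rho (i : Fin C.r) (v : V) :
    ⟪C.s (C.π i) v, C.rho⟫_ℝ = ⟪v, C.rho⟫_ℝ - ⟪v, C.π i⟫_ℝ := by
  have hpos := inner_self_pos_of_mem (C.simple_mem i)
  rw [s_apply_pairing (C.simple_mem i), inner_sub_left, real_inner_smul_left, inner_π_rho,
    pairing]
  congr 1
  rw [div_mul_div_comm, div_eq_iff (by positivity)]
  ring

-- Induction on the height `⟪α, ρ⟫`: some `s_i` lowers the height of a non-simple positive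
-- root `α`, and `s_α = s_i s_{s_i α} s_i`.
theorem exists_wordProd_eq_s_of_isPos {α : V} (hα : α ∈ C.Φ) (hp : C.IsPos α) :
    ∃ l, C.wordProd l = C.s α := by
  induction hn : (C.Φ.filter fun β => C.IsPos β ∧ ⟪β, C.rho⟫_ℝ < ⟪α, C.rho⟫_ℝ).card
    using Nat.strong_induction_on generalizing α with
  | _ n ih =>
  by_cases hsimple : ∃ i, α = C.π i
  · obtain ⟨i, rfl⟩ := hsimple
    exact ⟨[i], wordProd_singleton i⟩
  push Not at hsimple
  obtain ⟨i, hi⟩ := hp.exists_inner_π_pos (C.root_ne_zero α hα)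
  set β := C.s (C.π i) α
  have hβ : β ∈ C.Φ := C.refl_stable _ (C.simple_mem i) _ hα
  have hβp : C.IsPos β := isPos_s_π_of_ne hα hp (hsimple i)
  have hβα : ⟪β, C.rho⟫_ℝ < ⟪α, C.rho⟫_ℝ := by rw [inner_s_π_rho]; linarith
  have hlt : (C.Φ.filter fun γ => C.IsPos γ ∧ ⟪γ, C.rho⟫_ℝ < ⟪β, C.rho⟫_ℝ).card < n := by
    rw [← hn]
    refine Finset.card_lt_card ((Finset.ssubset_iff_of_subset fun γ hγ => ?_).2
      ⟨β, Finset.mem_filter.2 ⟨hβ, hβp, hβα⟩, fun h => (Finset.mem_filter.1 h).2.2.false⟩)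
    simp only [Finset.mem_filter] at hγ ⊢
    exact ⟨hγ.1, hγ.2.1, hγ.2.2.trans hβα⟩
  obtain ⟨l, hl⟩ := ih _ hlt hβ hβp rfl
  refine ⟨i :: l ++ [i], ?_⟩
  have hsi := C.simple_mem i
  rw [wordProd_append, wordProd_cons, wordProd_singleton, hl,
    ← mul_s_mul_inv (s_mem_W hsi) hα, s_inv hsi]
  simp only [← mul_assoc, s_mul_self hsi, one_mul]
  rw [mul_assoc, s_mul_self hsi, mul_one]

theorem exists_wordProd_eq {g : V ≃ₗ[ℝ] V} (hg : g ∈ C.W) : ∃ l, C.wordProd l = g := by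
  have hs : ∀ α ∈ C.Φ, ∃ l, C.wordProd l = C.s α := fun α hα =>
    (isPos_or_isNeg hα).elim (exists_wordProd_eq_s_of_isPos hα)
      fun hn => s_neg hα ▸ exists_wordProd_eq_s_of_isPos (neg_mem_Φ hα) hn
  rw [C.W_eq] at hg
  induction hg using Subgroup.closure_induction'' with
  | mem x hx => obtain ⟨α, hα, rfl⟩ := hx; exact hs α hα
  | inv_mem x hx => obtain ⟨α, hα, rfl⟩ := hx; rw [s_inv hα]; exact hs α hα
  | one => exact ⟨[], rfl⟩
  | mul x y _ _ hx hy =>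
    obtain ⟨l₁, rfl⟩ := hx
    obtain ⟨l₂, rfl⟩ := hy
    exact ⟨l₁ ++ l₂, wordProd_append l₁ l₂⟩

end Height

section Length

theorem length_le {g : V ≃ₗ[ℝ] V} {l : List (Fin C.r)} (h : C.wordProd l = g) :
    C.length g ≤ l.length :=
  Nat.sInf_le ⟨l, rfl, h⟩

theorem exists_reduced_word {g : V ≃ₗ[ℝ] V} (hg : g ∈ C.W) :
    ∃ l : List (Fin C.r), l.length = C.length g ∧ C.wordProd l = g := by
  obtain ⟨l, hl⟩ := exists_wordProd_eq hg
  exact Nat.sInf_mem (s := {n | ∃ l, l.length = n ∧ C.wordProd l = g}) ⟨_, l, rfl, hl⟩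

theorem length_inv_le {g : V ≃ₗ[ℝ] V} (hg : g ∈ C.W) : C.length g⁻¹ ≤ C.length g := by
  obtain ⟨l, hlen, rfl⟩ := exists_reduced_word hg
  simpa [hlen] using length_le (wordProd_reverse l)

theorem length_inv {g : V ≃ₗ[ℝ] V} (hg : g ∈ C.W) : C.length g⁻¹ = C.length g :=
  le_antisymm (length_inv_le hg) (by simpa using length_inv_le (inv_mem hg))

-- The deletion property: the letter of `l` at which `α` first becomes negative can be removed.
theorem exists_shorter_wordProd_mul_s (l : List (Fin C.r)) {α : V} (hα : α ∈ C.Φ)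
    (hp : C.IsPos α) (hn : C.IsNeg (C.wordProd l α)) :
    ∃ l' : List (Fin C.r), l'.length < l.length ∧ C.wordProd l * C.s α = C.wordProd l' := by
  induction l with
  | nil => exact absurd hp (IsNeg.not_isPos hα hn)
  | cons j l ih =>
    have hlα := apply_mem_Φ (wordProd_mem l) hα
    rcases isPos_or_isNeg hlα with hpos | hneg
    · have heq : C.wordProd l α = C.π j :=
        hpos.eq_π_of_isNeg_s_π hlα (by simpa [wordProd_cons] using hn)
      refine ⟨l, by simp, ?_⟩
      rw [wordProd_cons, mul_assoc, mul_s (wordProd_mem l) hα, heq, ← mul_assoc,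
        s_mul_self (C.simple_mem j), one_mul]
    · obtain ⟨l', hlen, hl'⟩ := ih hneg
      exact ⟨j :: l', by simpa using hlen, by rw [wordProd_cons, wordProd_cons, mul_assoc, hl']⟩

theorem length_mul_s_lt {w : V ≃ₗ[ℝ] V} (hw : w ∈ C.W) {α : V} (hα : α ∈ C.Φ)
    (hp : C.IsPos α) (hn : C.IsNeg (w α)) : C.length (w * C.s α) < C.length w := by
  obtain ⟨l, hlen, rfl⟩ := exists_reduced_word hw
  obtain ⟨l', hlt, hl'⟩ := exists_shorter_wordProd_mul_s l hα hp hn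
  exact (length_le hl'.symm).trans_lt (hlen ▸ hlt)

theorem length_s_π_mul_lt {z : V ≃ₗ[ℝ] V} (hz : z ∈ C.W) {i : Fin C.r}
    (hn : C.IsNeg (z⁻¹ (C.π i))) : C.length (C.s (C.π i) * z) < C.length z := by
  have hsi := C.simple_mem i
  rw [← length_inv (C.W.mul_mem (s_mem_W hsi) hz), mul_inv_rev, s_inv hsi, ← length_inv hz]
  exact length_mul_s_lt (inv_mem hz) hsi (isPos_π i) hn

end Length

section Dominant

theorem W_finite : (C.W : Set (V ≃ₗ[ℝ] V)).Finite := by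
  refine Set.Finite.of_finite_image (f := fun g (a : C.Φ) => g a)
    ((Set.Finite.pi fun _ => C.Φ.finite_toSet).subset ?_) ?_
  · rintro _ ⟨g, hg, rfl⟩ a -
    exact apply_mem_Φ hg a.2
  · intro g _ h _ hgh
    exact LinearEquiv.toLinearMap_injective
      (LinearMap.ext_on C.root_span fun a ha => congrFun hgh ⟨a, ha⟩)

-- A point of the orbit `Wλ` maximising `⟪·, ρ⟫` is dominant.
theorem exists_isDominant_apply (lam : V) : ∃ g ∈ C.W, C.IsDominant (g lam) := by
  obtain ⟨g, hg, hmax⟩ :=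
    Set.exists_max_image _ (fun g : V ≃ₗ[ℝ] V => ⟪g lam, C.rho⟫_ℝ) W_finite ⟨1, C.W.one_mem⟩
  refine ⟨g, hg, fun i => (pairing_nonneg_iff (C.simple_mem i) _).2 ?_⟩
  have := hmax _ (C.W.mul_mem (s_mem_W (C.simple_mem i)) hg)
  rw [LinearEquiv.mul_apply, inner_s_π_rho] at this
  linarith

theorem exists_int_pairing_π {lam : V} (hlam : lam ∈ C.X) (i : Fin C.r) :
    ∃ n : ℤ, pairing lam (C.π i) = n := by
  rw [C.X_eq] at hlam
  induction hlam using AddSubgroup.closure_induction with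
  | mem x hx =>
    obtain ⟨j, rfl⟩ := hx
    exact ⟨if j = i then 1 else 0, by rw [pairing, C.fund]; split_ifs <;> simp⟩
  | zero => exact ⟨0, by simp [pairing]⟩
  | add x y _ _ hx hy =>
    obtain ⟨m, hm⟩ := hx
    obtain ⟨n, hn⟩ := hy
    exact ⟨m + n, by rw [pairing_add_left, hm, hn, Int.cast_add]⟩
  | neg x _ hx =>
    obtain ⟨n, hn⟩ := hx
    exact ⟨-n, by rw [pairing_neg_left, hn, Int.cast_neg]⟩

end Dominant

section Bruhat

theorem IsDominant.isPos_sub_mul_s {ν : V} (hν : C.IsDominant ν) {a : V ≃ₗ[ℝ] V}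
    (ha : a ∈ C.W) {α : V} (hα : α ∈ C.Φ) (hlen : C.length a < C.length (a * C.s α)) :
    C.IsPos (a ν - (a * C.s α) ν) := by
  wlog hp : C.IsPos α generalizing α
  · have hn := (isPos_or_isNeg hα).resolve_left hp
    simpa [s_neg hα] using this (neg_mem_Φ hα) (by rwa [s_neg hα]) hn
  have haα : C.IsPos (a α) := (isPos_or_isNeg (apply_mem_Φ ha hα)).resolve_right
    fun hn => (length_mul_s_lt ha hα hp hn).not_gt hlen
  have hdiff : a ν - (a * C.s α) ν = pairing ν α • a α := by
    rw [LinearEquiv.mul_apply, s_apply_pairing hα, map_sub, map_smul, sub_sub_cancel]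
  rw [hdiff]
  exact haα.smul ((pairing_nonneg_iff hα ν).2 (hν.inner_nonneg hp))

theorem IsDominant.isPos_sub_of_bruhatLE {ν : V} (hν : C.IsDominant ν) {w z : V ≃ₗ[ℝ] V}
    (hw : w ∈ C.W) (hwz : C.BruhatLE w z) : z ∈ C.W ∧ C.IsPos (w ν - z ν) := by
  induction hwz with
  | refl => exact ⟨hw, by simpa using isPos_zero⟩
  | tail _ hstep ih =>
    obtain ⟨⟨α, hα, rfl⟩, hlen⟩ := hstep
    refine ⟨C.W.mul_mem ih.1 (s_mem_W hα), ?_⟩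
    simpa using ih.2.add (hν.isPos_sub_mul_s ih.1 hα hlen)

theorem bruhatLE_s_π_mul {z : V ≃ₗ[ℝ] V} (hz : z ∈ C.W) {i : Fin C.r}
    (hn : C.IsNeg (z⁻¹ (C.π i))) : C.BruhatLE (C.s (C.π i) * z) z := by
  have hβ := apply_mem_Φ (inv_mem hz) (C.simple_mem i)
  refine Relation.ReflTransGen.single ⟨⟨_, hβ, ?_⟩, length_s_π_mul_lt hz hn⟩
  rw [mul_assoc, mul_s hz hβ, ← mul_assoc]
  simp [s_mul_self (C.simple_mem i)]

end Bruhat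

theorem s_π_apply_sub_self (lam : V) (i : Fin C.r) :
    C.s (C.π i) lam - lam = (-pairing lam (C.π i)) • C.π i := by
  rw [s_apply_pairing (C.simple_mem i), neg_smul, sub_sub_cancel_left]

theorem domLE_s_π_iff {lam : V} (hlam : lam ∈ C.X) (i : Fin C.r) :
    C.DomLE lam (C.s (C.π i) lam) ↔ pairing lam (C.π i) ≤ 0 := by
  rw [DomLE, s_π_apply_sub_self]
  constructor
  · rintro ⟨c, hc⟩
    have hpos : C.IsPos ((-pairing lam (C.π i)) • C.π i) :=
      hc ▸ isPos_sum _ fun α hα => (Finset.mem_filter.1 hα).2.smul (Nat.cast_nonneg _)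
    linarith [hpos.nonneg_of_smul_π]
  · intro hle
    obtain ⟨n, hn⟩ := exists_int_pairing_π hlam i
    have hn0 : n ≤ 0 := by exact_mod_cast hn ▸ hle
    refine ⟨fun α => if α = C.π i then (-n).toNat else 0, ?_⟩
    have hmem : C.π i ∈ C.Φ.filter (fun a => C.IsPos a) :=
      Finset.mem_filter.2 ⟨C.simple_mem i, isPos_π i⟩
    simp only [Nat.cast_ite, Nat.cast_zero, ite_smul, zero_smul, Finset.sum_ite_eq', if_pos hmem]
    rw [hn, ← Int.cast_natCast, Int.toNat_of_nonneg (by omega), Int.cast_neg]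

theorem pairing_nonpos_of_excLE_s_π {lam : V} {i : Fin C.r}
    (h : C.ExcLE (C.s (C.π i) lam) lam) : pairing lam (C.π i) ≤ 0 := by
  rcases h with hlt | ⟨ν, -, hν, w, hw, z, -, hwz, hw_eq, hz_eq⟩
  · rw [C.inner_invariant _ (s_mem_W (C.simple_mem i))] at hlt
    exact absurd hlt (lt_irrefl _)
  · have hpos := (hν.isPos_sub_of_bruhatLE hw hwz).2
    rw [← hw_eq, ← hz_eq, s_π_apply_sub_self] at hpos
    linarith [hpos.nonneg_of_smul_π]

theorem excLE_s_π_of_pairing_nonpos {lam : V} (hlam : lam ∈ C.X) {i : Fin C.r}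
    (h : pairing lam (C.π i) ≤ 0) : C.ExcLE (C.s (C.π i) lam) lam := by
  obtain ⟨g, hg, hν⟩ := exists_isDominant_apply lam
  refine Or.inr ⟨g lam, C.X_stable g hg lam hlam, hν, ?_⟩
  rcases h.eq_or_lt with h0 | hneg
  · have hfix : C.s (C.π i) lam = lam := by
      rw [s_apply_pairing (C.simple_mem i), h0, zero_smul, sub_zero]
    exact ⟨g⁻¹, inv_mem hg, g⁻¹, inv_mem hg, .refl, by simp [hfix], by simp⟩
  · refine ⟨C.s (C.π i) * g⁻¹, C.W.mul_mem (s_mem_W (C.simple_mem i)) (inv_mem hg), g⁻¹,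
      inv_mem hg, bruhatLE_s_π_mul (inv_mem hg) ?_, by simp, by simp⟩
    rw [inv_inv]
    refine (isPos_or_isNeg (apply_mem_Φ hg (C.simple_mem i))).resolve_left fun hp => ?_
    have hinner := hν.inner_nonneg hp
    rw [C.inner_invariant g hg] at hinner
    exact hneg.not_ge ((pairing_nonneg_iff (C.simple_mem i) lam).2 hinner)

end RootSystemData

open RootSystemData in
/-- For every `λ ∈ X` and every simple root `α`: `s_α λ ≤ₑ λ` in the
excellent order iff `s_α λ ≥_d λ` in the dominance order, equivalently iff `(λ, α∨) ≤ 0`. -/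
theorem statement_13
    {V : Type} [NormedAddCommGroup V] [InnerProductSpace ℝ V] [FiniteDimensional ℝ V]
    (C : RootSystemData V)
    (lam : V) (hlam : lam ∈ C.X) (i : Fin C.r) :
    (C.ExcLE (C.s (C.π i) lam) lam ↔ C.DomLE lam (C.s (C.π i) lam)) ∧
    (C.ExcLE (C.s (C.π i) lam) lam ↔ pairing lam (C.π i) ≤ 0) := by
  have hexc : C.ExcLE (C.s (C.π i) lam) lam ↔ pairing lam (C.π i) ≤ 0 :=
    ⟨pairing_nonpos_of_excLE_s_π, excLE_s_π_of_pairing_nonpos hlam⟩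
  exact ⟨hexc.trans (domLE_s_π_iff hlam i).symm, hexc⟩
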